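/- arXiv:2404.15444 — 3 statements merged into one kernel-verified Lean document; each statement's English description precedes it below -/
import Mathlib

section
/- For every valid packing π of a finite family σ = (σ_1, …, σ_n) of jobs, ∫_ℝ ⌈‖s(σ, t)‖_∞⌉ dt ≤ cost(π), where s(σ, t) := ∑_{i : a_i ≤ t < f_i} s_i is the coordinatewise sum of the size vectors of the jobs active at time t and ⌈x⌉ denotes the ceiling of x. -/
open MeasureTheory Finset

/-- A `d`-dimensional job: arrival time `a`, finishing time `f` with `a < f`,
and a size vector `s ∈ [0,1]^d`. The job is active at time `t` iff `a ≤ t < f`. -/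
structure Job (d : ℕ) where
  a : ℝ
  f : ℝ
  s : Fin d → ℝ
  a_lt_f : a < f
  s_nonneg : ∀ j, 0 ≤ s j
  s_le_one : ∀ j, s j ≤ 1

/-- A packing `π` (assignment of jobs to servers) is valid if for every server `k`,
every time `t` and every coordinate `j`, the total size in coordinate `j` of the jobs
assigned to `k` and active at `t` is at most `1`. -/
def ValidPacking {d : ℕ} {ι : Type*} [Fintype ι] (σ : ι → Job d) (π : ι → ℕ) : Prop :=
  ∀ (k : ℕ) (t : ℝ) (j : Fin d),
    ∑ i ∈ Finset.univ.filter (fun i => π i = k ∧ (σ i).a ≤ t ∧ t < (σ i).f),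
      (σ i).s j ≤ 1

/-- The cost of a packing: for each server that is used, the difference between the
maximum finishing time and the minimum arrival time of the jobs assigned to it
(for a used server the corresponding set is finite and nonempty, so `sSup`/`sInf`
realize the maximum/minimum), summed over all used servers. -/
noncomputable def packCost {d : ℕ} {ι : Type*} [Fintype ι] [DecidableEq ι]
    (σ : ι → Job d) (π : ι → ℕ) : ℝ :=
  ∑ k ∈ Finset.univ.image π,
    (sSup ((fun i => (σ i).f) '' {i | π i = k}) -
      sInf ((fun i => (σ i).a) '' {i | π i = k}))

/-! All jobs of a server run inside its window `[min aᵢ, max fᵢ)`, and validity caps their load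
there at `1` in every coordinate. So at each time `t` the load in every coordinate, and hence the
ceiling of the maximal one, is at most the integer number of servers whose window contains `t`.
This count integrates to the total length of the windows, which is the cost. -/

lemma integrable_indicator_Ico_one (a b : ℝ) : Integrable ((Set.Ico a b).indicator (1 : ℝ → ℝ)) :=
  (integrable_indicator_iff measurableSet_Ico).mpr (integrableOn_const measure_Ico_lt_top.ne)

section Packing

variable {d : ℕ} {ι : Type*} [Fintype ι] (σ : ι → Job d) (π : ι → ℕ)

noncomputable def activeLoad (j : Fin d) (t : ℝ) : ℝ :=
  ∑ i ∈ univ.filter (fun i => (σ i).a ≤ t ∧ t < (σ i).f), (σ i).s j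

noncomputable def serverStart (k : ℕ) : ℝ := sInf ((fun i => (σ i).a) '' {i | π i = k})

noncomputable def serverEnd (k : ℕ) : ℝ := sSup ((fun i => (σ i).f) '' {i | π i = k})

noncomputable def busyServers [DecidableEq ι] (t : ℝ) : ℕ :=
  #{k ∈ univ.image π | t ∈ Set.Ico (serverStart σ π k) (serverEnd σ π k)}

variable {σ π}

lemma activeLoad_nonneg (j : Fin d) (t : ℝ) : 0 ≤ activeLoad σ j t :=
  sum_nonneg fun i _ => (σ i).s_nonneg j

lemma serverStart_le (i : ι) : serverStart σ π (π i) ≤ (σ i).a :=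
  csInf_le ((Set.toFinite _).image _).bddBelow (Set.mem_image_of_mem _ rfl)

lemma le_serverEnd (i : ι) : (σ i).f ≤ serverEnd σ π (π i) :=
  le_csSup ((Set.toFinite _).image _).bddAbove (Set.mem_image_of_mem _ rfl)

lemma serverStart_le_serverEnd (i : ι) : serverStart σ π (π i) ≤ serverEnd σ π (π i) :=
  (serverStart_le i).trans ((σ i).a_lt_f.le.trans (le_serverEnd i))

lemma serverLoad_le_indicator (hπ : ValidPacking σ π) (k : ℕ) (t : ℝ) (j : Fin d) :
    ∑ i ∈ univ.filter (fun i => π i = k ∧ (σ i).a ≤ t ∧ t < (σ i).f), (σ i).s j ≤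
      (Set.Ico (serverStart σ π k) (serverEnd σ π k)).indicator 1 t := by
  by_cases ht : t ∈ Set.Ico (serverStart σ π k) (serverEnd σ π k)
  · rw [Set.indicator_of_mem ht]
    exact hπ k t j
  · rw [Set.indicator_of_notMem ht]
    refine (sum_eq_zero fun i hi => ?_).le
    obtain ⟨rfl, hai, hfi⟩ := (mem_filter.mp hi).2
    exact absurd ⟨(serverStart_le i).trans hai, hfi.trans_le (le_serverEnd i)⟩ ht

variable [DecidableEq ι]

lemma busyServers_eq_sum_indicator (t : ℝ) :
    (busyServers σ π t : ℝ) =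
      ∑ k ∈ univ.image π, (Set.Ico (serverStart σ π k) (serverEnd σ π k)).indicator 1 t := by
  simp only [busyServers, Set.indicator_apply, Pi.one_apply, sum_boole]

lemma activeLoad_le_busyServers (hπ : ValidPacking σ π) (j : Fin d) (t : ℝ) :
    activeLoad σ j t ≤ busyServers σ π t := by
  rw [busyServers_eq_sum_indicator, activeLoad,
    ← sum_fiberwise_of_maps_to (g := π) fun i _ => mem_image_of_mem π (mem_univ i)]
  refine sum_le_sum fun k _ => ?_
  rw [filter_filter]
  simpa only [and_comm (a := π _ = k)] using serverLoad_le_indicator hπ k t j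

lemma ceil_iSup_activeLoad_le_busyServers (hπ : ValidPacking σ π) (t : ℝ) :
    ⌈⨆ j, activeLoad σ j t⌉ ≤ busyServers σ π t :=
  Int.ceil_le.mpr <| by
    exact_mod_cast Real.iSup_le (activeLoad_le_busyServers hπ · t) (Nat.cast_nonneg _)

lemma integrable_busyServers : Integrable fun t => (busyServers σ π t : ℝ) := by
  simp only [busyServers_eq_sum_indicator]
  exact integrable_finsetSum _ fun k _ => integrable_indicator_Ico_one _ _

lemma integral_busyServers : ∫ t, (busyServers σ π t : ℝ) = packCost σ π := by
  simp only [busyServers_eq_sum_indicator]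
  rw [integral_finsetSum _ fun k _ => integrable_indicator_Ico_one _ _]
  refine sum_congr rfl fun k hk => ?_
  obtain ⟨i, -, rfl⟩ := mem_image.mp hk
  rw [integral_indicator_one measurableSet_Ico,
    Real.volume_real_Ico_of_le (serverStart_le_serverEnd i)]
  rfl

end Packing

theorem integral_ceil_norm_active_le_cost_general (d n : ℕ)
    (σ : Fin n → Job d) (π : Fin n → ℕ) (hπ : ValidPacking σ π) :
    (∫ t : ℝ, (⌈⨆ j, ∑ i ∈ Finset.univ.filter
        (fun i => (σ i).a ≤ t ∧ t < (σ i).f), (σ i).s j⌉ : ℝ))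
      ≤ packCost σ π := by
  change ∫ t, (⌈⨆ j, activeLoad σ j t⌉ : ℝ) ≤ _
  have load_nonneg (t : ℝ) : (0 : ℝ) ≤ ⌈⨆ j, activeLoad σ j t⌉ := by
    exact_mod_cast Int.ceil_nonneg (Real.iSup_nonneg (activeLoad_nonneg · t))
  have load_le (t : ℝ) : (⌈⨆ j, activeLoad σ j t⌉ : ℝ) ≤ busyServers σ π t := by
    exact_mod_cast ceil_iSup_activeLoad_le_busyServers hπ t
  rw [← integral_busyServers]
  -- no integrability of the left side is needed: were it not integrable, its integral would be `0`
  exact integral_mono_of_nonneg (ae_of_all _ load_nonneg) integrable_busyServers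
    (ae_of_all _ load_le)

/-- For every valid packing `π` of a finite family `σ` of jobs,
`∫_ℝ ⌈‖s(σ,t)‖_∞⌉ dt ≤ cost(π)`, where `s(σ,t)` is the coordinatewise sum of the
size vectors of the jobs active at time `t`. -/
theorem integral_ceil_norm_active_le_cost (d n : ℕ) (hd : 1 ≤ d)
    (σ : Fin n → Job d) (π : Fin n → ℕ) (hπ : ValidPacking σ π) :
    (∫ t : ℝ, (⌈⨆ j, ∑ i ∈ Finset.univ.filter
        (fun i => (σ i).a ≤ t ∧ t < (σ i).f), (σ i).s j⌉ : ℝ))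
      ≤ packCost σ π :=
  integral_ceil_norm_active_le_cost_general d n σ π hπ
end

section
/- For every valid packing π of a finite family σ = (σ_1, …, σ_n) of jobs, the total utilization satisfies util(σ) := ∑_{i=1}^n (f_i − a_i) · ‖s_i‖_∞ ≤ d · cost(π). -/
open MeasureTheory Finset

/-!
Fix a coordinate `j`. On one server, the function `t ↦ ∑ (sizes in coordinate j of the jobs
active at t)` is bounded by `1` and vanishes outside the server's active span
`[min aᵢ, max fᵢ]`; its integral is `∑ (fᵢ - aᵢ) sᵢʲ`, so this sum is at most the span.
Summing over servers bounds `∑ᵢ (fᵢ - aᵢ) sᵢʲ` by the cost, and `‖sᵢ‖_∞ ≤ ∑ⱼ sᵢʲ` then gives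
the factor `d`.
-/

open MeasureTheory Set

theorem Real.iSup_le_sum {ι : Type*} [Fintype ι] {x : ι → ℝ} (hx : ∀ i, 0 ≤ x i) :
    ⨆ i, x i ≤ ∑ i, x i :=
  Real.iSup_le (fun i => Finset.single_le_sum (fun j _ => hx j) (Finset.mem_univ i))
    (Finset.sum_nonneg fun i _ => hx i)

theorem sum_length_mul_le_volume_of_load_le_one {ι : Type*} (S : Finset ι) (a f c : ι → ℝ)
    {U : Set ℝ} (hU : MeasurableSet U) (hUfin : volume U ≠ ⊤)
    (haf : ∀ i ∈ S, a i ≤ f i) (hsub : ∀ i ∈ S, Ico (a i) (f i) ⊆ U)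
    (hload : ∀ t ∈ U, ∑ i ∈ S with a i ≤ t ∧ t < f i, c i ≤ 1) :
    ∑ i ∈ S, (f i - a i) * c i ≤ volume.real U := by
  let load : ℝ → ℝ := fun t => ∑ i ∈ S, (Ico (a i) (f i)).indicator (fun _ => c i) t
  have hint : ∀ i ∈ S, Integrable ((Ico (a i) (f i)).indicator (fun _ => c i)) := fun i _ =>
    (integrableOn_const measure_Ico_lt_top.ne).integrable_indicator measurableSet_Ico
  have hload_le : load ≤ U.indicator 1 := by
    intro t
    by_cases ht : t ∈ U
    · simpa [load, ht, indicator_apply, Finset.sum_ite] using hload t ht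
    · have hzero : ∀ i ∈ S, (Ico (a i) (f i)).indicator (fun _ => c i) t = 0 :=
        fun i hi => indicator_of_notMem (fun h => ht (hsub i hi h)) _
      simp [load, ht, Finset.sum_eq_zero hzero]
  calc ∑ i ∈ S, (f i - a i) * c i = ∫ t, load t := by
        rw [integral_finsetSum S hint]
        refine Finset.sum_congr rfl fun i hi => ?_
        rw [integral_indicator_const _ measurableSet_Ico, Real.volume_real_Ico,
          max_eq_left (sub_nonneg.2 (haf i hi)), smul_eq_mul]
    _ ≤ ∫ t, U.indicator 1 t :=
        integral_mono (integrable_finsetSum S hint)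
          ((integrableOn_const hUfin).integrable_indicator hU) hload_le
    _ = volume.real U := integral_indicator_one hU

theorem ValidPacking.sum_server_le_span {d : ℕ} {ι : Type*} [Fintype ι] {σ : ι → Job d}
    {π : ι → ℕ} (hπ : ValidPacking σ π) (j : Fin d) {k : ℕ} (hk : k ∈ Finset.univ.image π) :
    ∑ i with π i = k, ((σ i).f - (σ i).a) * (σ i).s j ≤
      sSup ((fun i => (σ i).f) '' {i | π i = k}) - sInf ((fun i => (σ i).a) '' {i | π i = k}) := by
  set F := sSup ((fun i => (σ i).f) '' {i | π i = k})
  set A := sInf ((fun i => (σ i).a) '' {i | π i = k})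
  have hA : ∀ i, π i = k → A ≤ (σ i).a := fun i hi =>
    csInf_le (Set.toFinite _).bddBelow (mem_image_of_mem _ hi)
  have hF : ∀ i, π i = k → (σ i).f ≤ F := fun i hi =>
    le_csSup (Set.toFinite _).bddAbove (mem_image_of_mem _ hi)
  obtain ⟨i₀, -, hi₀⟩ := Finset.mem_image.1 hk
  have hAF : A ≤ F := (hA i₀ hi₀).trans ((σ i₀).a_lt_f.le.trans (hF i₀ hi₀))
  have hspan := sum_length_mul_le_volume_of_load_le_one {i | π i = k}
    (fun i => (σ i).a) (fun i => (σ i).f) (fun i => (σ i).s j) measurableSet_Icc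
    measure_Icc_lt_top.ne (fun i _ => (σ i).a_lt_f.le)
    (fun i hi => Ico_subset_Icc_self.trans
      (Icc_subset_Icc (hA i (Finset.mem_filter.1 hi).2) (hF i (Finset.mem_filter.1 hi).2)))
    (fun t _ => by simpa only [Finset.filter_filter] using hπ k t j)
  rwa [Real.volume_real_Icc, max_eq_left (sub_nonneg.2 hAF)] at hspan

theorem ValidPacking.sum_mul_size_le_packCost {d : ℕ} {ι : Type*} [Fintype ι] [DecidableEq ι]
    {σ : ι → Job d} {π : ι → ℕ} (hπ : ValidPacking σ π) (j : Fin d) :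
    ∑ i, ((σ i).f - (σ i).a) * (σ i).s j ≤ packCost σ π := by
  rw [← Finset.sum_fiberwise_of_maps_to (g := π) fun i _ => Finset.mem_image_of_mem π
    (Finset.mem_univ i)]
  exact Finset.sum_le_sum fun k hk => hπ.sum_server_le_span j hk

theorem util_le_dim_mul_cost_general (d n : ℕ)
    (σ : Fin n → Job d) (π : Fin n → ℕ) (hπ : ValidPacking σ π) :
    ∑ i, ((σ i).f - (σ i).a) * (⨆ j, (σ i).s j) ≤ (d : ℝ) * packCost σ π := by
  calc ∑ i, ((σ i).f - (σ i).a) * (⨆ j, (σ i).s j)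
      ≤ ∑ i, ∑ j, ((σ i).f - (σ i).a) * (σ i).s j := by
        refine Finset.sum_le_sum fun i _ => ?_
        rw [← Finset.mul_sum]
        exact mul_le_mul_of_nonneg_left (Real.iSup_le_sum (σ i).s_nonneg)
          (sub_nonneg.2 (σ i).a_lt_f.le)
    _ = ∑ j, ∑ i, ((σ i).f - (σ i).a) * (σ i).s j := Finset.sum_comm
    _ ≤ ∑ _j : Fin d, packCost σ π := Finset.sum_le_sum fun j _ => hπ.sum_mul_size_le_packCost j
    _ = (d : ℝ) * packCost σ π := by simp

/-- For every valid packing `π` of a finite family `σ` of jobs, the total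
utilization `util(σ) = ∑ i, (fᵢ - aᵢ) · ‖sᵢ‖_∞` is at most `d · cost(π)`. -/
theorem util_le_dim_mul_cost (d n : ℕ) (hd : 1 ≤ d)
    (σ : Fin n → Job d) (π : Fin n → ℕ) (hπ : ValidPacking σ π) :
    ∑ i, ((σ i).f - (σ i).a) * (⨆ j, (σ i).s j) ≤ (d : ℝ) * packCost σ π :=
  util_le_dim_mul_cost_general d n σ π hπ
end

section
/- Let μ ≥ 1 and T > 0, let a_1, …, a_n ∈ [0, T) be arrival times and s_1, …, s_n ∈ ℝ^d nonnegative size vectors, and let N : ℝ → ℝ be a nonnegative measurable function satisfying N(t) ≤ s_∞(σ, t−2μ, t) + s_∞(σ, t−μ, t) + 1 for every t ∈ [0, T). Then ∫_0^T N(t) dt ≤ 3μ · ∑_{i=1}^n ‖s_i‖_∞ + T. -/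
open MeasureTheory Set

/-!
Each job contributes `‖s_i‖_∞` to the first window sum exactly while `t ∈ (a_i, a_i + 2μ)`
and to the second exactly while `t ∈ (a_i, a_i + μ)`, so integrating the pointwise bound
over `t` charges every job at most `2μ + μ = 3μ` times its size, and the constant `1`
contributes `T`.
-/

theorem integrable_indicator_Ioo_const (b e c : ℝ) :
    Integrable ((Ioo b e).indicator fun _ => c) :=
  (integrable_indicator_iff measurableSet_Ioo).2 (integrableOn_const measure_Ioo_lt_top.ne)

section windowLoad

variable {ι : Type*} [Fintype ι] (a v : ι → ℝ) (w : ℝ)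

/-- `windowLoad a v w t` is the paper's `s_∞(σ, t - w, t)` for arrival times `a` and
sizes `v`. -/
noncomputable def windowLoad (t : ℝ) : ℝ :=
  ∑ i ∈ Finset.univ.filter (fun i => t - w < a i ∧ a i < t), v i

theorem windowLoad_eq_sum_indicator :
    windowLoad a v w = fun t => ∑ i, (Ioo (a i) (a i + w)).indicator (fun _ => v i) t := by
  ext t
  rw [windowLoad, Finset.sum_filter]
  refine Finset.sum_congr rfl fun i _ => ?_
  have hmem : (t - w < a i ∧ a i < t) ↔ t ∈ Ioo (a i) (a i + w) := by
    rw [mem_Ioo]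
    constructor <;> rintro ⟨h₁, h₂⟩ <;> constructor <;> linarith
  simp only [indicator_apply, hmem]

theorem windowLoad_nonneg {v : ι → ℝ} (hv : ∀ i, 0 ≤ v i) (t : ℝ) :
    0 ≤ windowLoad a v w t :=
  Finset.sum_nonneg fun i _ => hv i

theorem integrable_windowLoad : Integrable (windowLoad a v w) := by
  rw [windowLoad_eq_sum_indicator]
  exact integrable_finsetSum _ fun i _ => integrable_indicator_Ioo_const _ _ _

theorem integral_windowLoad {w : ℝ} (hw : 0 ≤ w) :
    ∫ t, windowLoad a v w t = w * ∑ i, v i := by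
  rw [windowLoad_eq_sum_indicator,
    integral_finsetSum _ fun i _ => integrable_indicator_Ioo_const _ _ _]
  simp only [integral_indicator_const _ measurableSet_Ioo,
    Real.volume_real_Ioo_of_le (le_add_of_nonneg_right hw), add_sub_cancel_left, smul_eq_mul,
    Finset.mul_sum]

theorem setIntegral_windowLoad_le {v : ι → ℝ} (hv : ∀ i, 0 ≤ v i) {w : ℝ} (hw : 0 ≤ w)
    (S : Set ℝ) : ∫ t in S, windowLoad a v w t ≤ w * ∑ i, v i :=
  integral_windowLoad a v hw ▸ setIntegral_le_integral (integrable_windowLoad a v w)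
    (Filter.Eventually.of_forall (windowLoad_nonneg a w hv))

end windowLoad

theorem integral_N_le_general (d n : ℕ) (μ T : ℝ) (hμ : 1 ≤ μ) (hT : 0 < T)
    (a : Fin n → ℝ)
    (s : Fin n → Fin d → ℝ) (hs : ∀ i j, 0 ≤ s i j)
    (N : ℝ → ℝ) (hN0 : ∀ t, 0 ≤ N t)
    (hNle : ∀ t ∈ Set.Ico (0 : ℝ) T,
      N t ≤ (∑ i ∈ Finset.univ.filter (fun i => t - 2*μ < a i ∧ a i < t), ⨆ j, s i j)
          + (∑ i ∈ Finset.univ.filter (fun i => t - μ < a i ∧ a i < t), ⨆ j, s i j)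
          + 1) :
    (∫ t in (0:ℝ)..T, N t) ≤ 3 * μ * (∑ i, ⨆ j, s i j) + T := by
  set v : Fin n → ℝ := fun i => ⨆ j, s i j
  have hv : ∀ i, 0 ≤ v i := fun i => Real.iSup_nonneg (hs i)
  have hμ₀ : 0 ≤ μ := zero_le_one.trans hμ
  have hload₂ := (integrable_windowLoad a v (2 * μ)).integrableOn (s := Ico 0 T)
  have hload₁ := (integrable_windowLoad a v μ).integrableOn (s := Ico 0 T)
  have hone : IntegrableOn (fun _ => (1 : ℝ)) (Ico 0 T) :=
    integrableOn_const measure_Ico_lt_top.ne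
  rw [intervalIntegral.integral_of_le hT.le, integral_Ioc_eq_integral_Ioo,
    ← integral_Ico_eq_integral_Ioo]
  calc ∫ t in Ico 0 T, N t
      ≤ ∫ t in Ico 0 T, (windowLoad a v (2 * μ) t + windowLoad a v μ t + 1) :=
        integral_mono_of_nonneg (Filter.Eventually.of_forall hN0) ((hload₂.add hload₁).add hone)
          (ae_restrict_of_forall_mem measurableSet_Ico hNle)
    _ = (∫ t in Ico 0 T, windowLoad a v (2 * μ) t) + (∫ t in Ico 0 T, windowLoad a v μ t)
          + T := by
        rw [integral_add (f := fun t => windowLoad a v (2 * μ) t + windowLoad a v μ t)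
          (hload₂.add hload₁) hone, integral_add hload₂ hload₁, setIntegral_const,
          Real.volume_real_Ico_of_le hT.le, sub_zero, smul_eq_mul, mul_one]
    _ ≤ 2 * μ * ∑ i, v i + μ * ∑ i, v i + T := by
        gcongr
        · exact setIntegral_windowLoad_le a hv (by positivity) _
        · exact setIntegral_windowLoad_le a hv hμ₀ _
    _ = 3 * μ * ∑ i, v i + T := by ring

/-- Let `μ ≥ 1`, `T > 0`, arrival times `a i ∈ [0, T)`, nonnegative size
vectors `s i ∈ ℝ^d`, and let `N : ℝ → ℝ` be a nonnegative measurable function with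
`N t ≤ s_∞(σ, t-2μ, t) + s_∞(σ, t-μ, t) + 1` for every `t ∈ [0, T)`, where
`s_∞(σ, t', t) = ∑_{i : t' < a i < t} ‖s i‖_∞`. Then
`∫_0^T N(t) dt ≤ 3μ · ∑ i, ‖s i‖_∞ + T`. -/
theorem integral_N_le (d n : ℕ) (μ T : ℝ) (hμ : 1 ≤ μ) (hT : 0 < T)
    (a : Fin n → ℝ) (ha : ∀ i, a i ∈ Set.Ico (0 : ℝ) T)
    (s : Fin n → Fin d → ℝ) (hs : ∀ i j, 0 ≤ s i j)
    (N : ℝ → ℝ) (hN0 : ∀ t, 0 ≤ N t) (hNmeas : Measurable N)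
    (hNle : ∀ t ∈ Set.Ico (0 : ℝ) T,
      N t ≤ (∑ i ∈ Finset.univ.filter (fun i => t - 2*μ < a i ∧ a i < t), ⨆ j, s i j)
          + (∑ i ∈ Finset.univ.filter (fun i => t - μ < a i ∧ a i < t), ⨆ j, s i j)
          + 1) :
    (∫ t in (0:ℝ)..T, N t) ≤ 3 * μ * (∑ i, ⨆ j, s i j) + T :=
  integral_N_le_general d n μ T hμ hT a s hs N hN0 hNle
end
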